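/- arXiv:2401.16097 — 3 statements merged into one kernel-verified Lean document; each statement's English description precedes it below -/
import Mathlib

section
/- Let WN = (P,T,F,i,o) be a sound free-choice workflow net with initial marking M_i (one token on the source i and no tokens elsewhere). Then for every place p ∈ P, every acyclic path W from p to the sink o, and every marking M reachable from M_i, the number of places on W that carry at least one token in M is at most 1 (Path-to-End Theorem). -/
/-- A Petri net: finite disjoint sets of places and transitions and a flow relation
`F ⊆ (P × T) ∪ (T × P)`. -/
structure PetriNet (α : Type) [DecidableEq α] where
  places : Finset α
  transitions : Finset α
  flow : Finset (α × α)
  disjoint_pt : Disjoint places transitions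
  flow_mem : ∀ e ∈ flow,
    (e.1 ∈ places ∧ e.2 ∈ transitions) ∨ (e.1 ∈ transitions ∧ e.2 ∈ places)

namespace PetriNet

variable {α : Type} [DecidableEq α]

/-- All nodes `P ∪ T` of the net. -/
def nodes (N : PetriNet α) : Finset α := N.places ∪ N.transitions

/-- The preset `•x` of a node. -/
def preset (N : PetriNet α) (x : α) : Finset α :=
  N.nodes.filter (fun p => (p, x) ∈ N.flow)

/-- The postset `x•` of a node. -/
def postset (N : PetriNet α) (x : α) : Finset α :=
  N.nodes.filter (fun s => (x, s) ∈ N.flow)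

/-- A path: a nonempty sequence of nodes, each consecutive pair related by the flow. -/
def IsPath (N : PetriNet α) (w : List α) : Prop :=
  w ≠ [] ∧ (∀ x ∈ w, x ∈ N.nodes) ∧ w.Chain' (fun a b => (a, b) ∈ N.flow)

/-- An acyclic path: a path whose nodes are pairwise distinct. -/
def IsAcyclicPath (N : PetriNet α) (w : List α) : Prop :=
  N.IsPath w ∧ w.Nodup

/-- There is an acyclic path from `x` to `y`. -/
def HasAcyclicPath (N : PetriNet α) (x y : α) : Prop :=
  ∃ w, N.IsAcyclicPath w ∧ w.head? = some x ∧ w.getLast? = some y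

/-- `HasPath(x)`: the set of all nodes to which `x` has an acyclic path
(including `x` itself, via the trivial path `(x)` when `x` is a node). -/
def HasPathSet (N : PetriNet α) (x : α) : Set α := {y | N.HasAcyclicPath x y}

/-- A net is acyclic iff no node has a nontrivial path to itself. -/
def Acyclic (N : PetriNet α) : Prop :=
  ∀ x, ¬ ∃ w, N.IsPath w ∧ 2 ≤ w.length ∧ w.head? = some x ∧ w.getLast? = some x

/-- A transition `t` is enabled in marking `M` iff all its input places carry a token. -/
def Enabled (N : PetriNet α) (M : α → ℕ) (t : α) : Prop :=
  t ∈ N.transitions ∧ ∀ p ∈ N.preset t, 1 ≤ M p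

/-- Firing `t` consumes one token from each input place and produces one on each output place. -/
def fire (N : PetriNet α) (M : α → ℕ) (t : α) : α → ℕ := fun p =>
  (M p - (if p ∈ N.preset t then 1 else 0)) + (if p ∈ N.postset t then 1 else 0)

/-- A step `M —t→ M'`. -/
def Step (N : PetriNet α) (M : α → ℕ) (t : α) (M' : α → ℕ) : Prop :=
  N.Enabled M t ∧ M' = N.fire M t

/-- Reachability via finite occurrence sequences. -/
def Reachable (N : PetriNet α) : (α → ℕ) → (α → ℕ) → Prop :=
  Relation.ReflTransGen (fun M M' => ∃ t, N.Step M t M')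

/-- Liveness with respect to an initial marking. -/
def Live (N : PetriNet α) (M₀ : α → ℕ) : Prop :=
  ∀ M, N.Reachable M₀ M → ∀ t ∈ N.transitions, ∃ M', N.Reachable M M' ∧ N.Enabled M' t

/-- Boundedness with respect to an initial marking. -/
def Bounded (N : PetriNet α) (M₀ : α → ℕ) : Prop :=
  ∃ n : ℕ, ∀ M, N.Reachable M₀ M → ∀ p ∈ N.places, M p ≤ n

/-- Free-choice: every place with more than one output transition is the unique
input of each of those transitions. -/
def FreeChoice (N : PetriNet α) : Prop :=
  ∀ p ∈ N.places, 1 < (N.postset p).card → ∀ t ∈ N.postset p, N.preset t = {p}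

/-- A node is active in `M` iff it is a place carrying a token or an enabled transition. -/
def Active (N : PetriNet α) (x : α) (M : α → ℕ) : Prop :=
  (x ∈ N.places ∧ 1 ≤ M x) ∨ (x ∈ N.transitions ∧ N.Enabled M x)

/-- One unfolding of the defining clauses of the concurrency relation. -/
def concStep (N : PetriNet α) (M₀ : α → ℕ) (R : Set (α × α)) : Set (α × α) :=
  {q | q.1 ≠ q.2 ∧
    (∃ M, N.Reachable M₀ M ∧ N.Active q.1 M ∧ N.Active q.2 M) ∧
    (q.1 ∈ N.transitions → q.2 ∈ N.places → ∀ z ∈ N.preset q.1, (z, q.2) ∈ R) ∧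
    (q.1 ∈ N.places → q.2 ∈ N.transitions → ∀ z ∈ N.preset q.2, (z, q.1) ∈ R) ∧
    (q.1 ∈ N.transitions → q.2 ∈ N.transitions →
      ∀ z ∈ N.preset q.1, ∀ z' ∈ N.preset q.2, (z, z') ∈ R)}

/-- The concurrency relation `∥`: the greatest relation consistent with its
defining clauses (Def. of concurrency). -/
def Concurrent (N : PetriNet α) (M₀ : α → ℕ) : Set (α × α) :=
  ⋃₀ {R | R ⊆ N.concStep M₀ R}

/-- The number of places on `w` carrying at least one token in `M`. -/
def tokensOn (N : PetriNet α) (M : α → ℕ) (w : List α) : ℕ :=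
  (w.toFinset.filter (fun p => p ∈ N.places ∧ 1 ≤ M p)).card

end PetriNet

/-- A workflow net: a Petri net with a source place `i` (`•i = ∅`), a sink place `o`
(`o• = ∅`), and every node on a path from `i` to `o`. -/
structure WorkflowNet (α : Type) [DecidableEq α] extends PetriNet α where
  source : α
  sink : α
  source_mem : source ∈ places
  sink_mem : sink ∈ places
  source_no_pre : toPetriNet.preset source = ∅
  sink_no_post : toPetriNet.postset sink = ∅
  all_on_path : ∀ x ∈ toPetriNet.nodes, ∃ w, toPetriNet.IsPath w ∧
    w.head? = some source ∧ w.getLast? = some sink ∧ x ∈ w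

namespace WorkflowNet

variable {α : Type} [DecidableEq α]

/-- The initial marking: one token on the source, none elsewhere. -/
def initialMarking (W : WorkflowNet α) : α → ℕ := fun p => if p = W.source then 1 else 0

/-- The terminal marking: one token on the sink, none elsewhere. -/
def terminalMarking (W : WorkflowNet α) : α → ℕ := fun p => if p = W.sink then 1 else 0

/-- Soundness of a workflow net. -/
def Sound (W : WorkflowNet α) : Prop :=
  (∀ M, W.toPetriNet.Reachable W.initialMarking M →
    W.toPetriNet.Reachable M W.terminalMarking ∧ (1 ≤ M W.sink → M = W.terminalMarking)) ∧
  (∀ t ∈ W.transitions, ∃ M M', W.toPetriNet.Reachable W.initialMarking M ∧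
    W.toPetriNet.Step M t M')

end WorkflowNet
namespace PetriNet

variable {α : Type} [DecidableEq α] (N : PetriNet α)

lemma mem_preset' {x t : α} : x ∈ N.preset t ↔ x ∈ N.nodes ∧ (x, t) ∈ N.flow := by
  simp [preset]

lemma mem_postset' {t x : α} : x ∈ N.postset t ↔ x ∈ N.nodes ∧ (t, x) ∈ N.flow := by
  simp [postset]

lemma place_mem_nodes {p : α} (h : p ∈ N.places) : p ∈ N.nodes := Finset.mem_union_left _ h

lemma trans_mem_nodes {t : α} (h : t ∈ N.transitions) : t ∈ N.nodes := Finset.mem_union_right _ h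

lemma not_trans_of_place {p : α} (h : p ∈ N.places) : p ∉ N.transitions :=
  fun h' => Finset.disjoint_left.mp N.disjoint_pt h h'

lemma flow_pt {p t : α} (h : (p, t) ∈ N.flow) (hp : p ∈ N.places) : t ∈ N.transitions := by
  rcases N.flow_mem _ h with ⟨_, ht⟩ | ⟨hp', _⟩
  · exact ht
  · exact absurd hp' (N.not_trans_of_place hp)

lemma flow_tp {t p : α} (h : (t, p) ∈ N.flow) (ht : t ∈ N.transitions) : p ∈ N.places := by
  rcases N.flow_mem _ h with ⟨ht', _⟩ | ⟨_, hp⟩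
  · exact absurd ht (N.not_trans_of_place ht')
  · exact hp

lemma fire_mono {M : α → ℕ} {t p : α} (h : p ∉ N.preset t) : M p ≤ N.fire M t p := by
  unfold fire
  rw [if_neg h]
  split <;> omega

lemma fire_pos {M : α → ℕ} {t p : α} (ht : N.Enabled M t) (h : p ∈ N.postset t) :
    1 ≤ N.fire M t p := by
  unfold fire
  rw [if_pos h]
  by_cases hp : p ∈ N.preset t
  · have := ht.2 p hp
    rw [if_pos hp]; omega
  · rw [if_neg hp]; omega

lemma fire_sub {M : α → ℕ} {t p : α} : M p - 1 ≤ N.fire M t p := by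
  unfold fire
  split <;> split <;> omega

/-- Along any occurrence sequence, either the tokens on `a` and `b` never decrease,
or there is an intermediate marking (with at least as many tokens on `a` and `b`)
enabling a transition that consumes from `a` or from `b`. -/
lemma first_consumer (a b : α) :
    ∀ M M', N.Reachable M M' →
      (M a ≤ M' a ∧ M b ≤ M' b) ∨
      ∃ Mτ u, N.Reachable M Mτ ∧ M a ≤ Mτ a ∧ M b ≤ Mτ b ∧ N.Enabled Mτ u ∧
        (a ∈ N.preset u ∨ b ∈ N.preset u) := by
  intro M M' h
  induction h using Relation.ReflTransGen.head_induction_on with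
  | refl => exact Or.inl ⟨le_rfl, le_rfl⟩
  | @head X X₁ hstep hrest ih =>
    obtain ⟨t, hen, hfire⟩ := hstep
    by_cases hc : a ∈ N.preset t ∨ b ∈ N.preset t
    · exact Or.inr ⟨X, t, Relation.ReflTransGen.refl, le_rfl, le_rfl, hen, hc⟩
    · push_neg at hc
      have ha : X a ≤ X₁ a := hfire ▸ N.fire_mono hc.1
      have hb : X b ≤ X₁ b := hfire ▸ N.fire_mono hc.2
      rcases ih with ⟨h1, h2⟩ | ⟨Mτ, u, hr, h1, h2, hu, hd⟩
      · exact Or.inl ⟨ha.trans h1, hb.trans h2⟩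
      · exact Or.inr ⟨Mτ, u, Relation.ReflTransGen.head ⟨t, hen, hfire⟩ hr,
          ha.trans h1, hb.trans h2, hu, hd⟩

/-- In a free-choice net, if some transition consuming from a marked place `q` is enabled,
then any chosen output transition of `q` is enabled. -/
lemma redirect {M : α → ℕ} {q t' u : α} (hfc : N.FreeChoice) (hq : q ∈ N.places)
    (ht' : (q, t') ∈ N.flow) (hu : N.Enabled M u) (hqu : q ∈ N.preset u)
    (hMq : 1 ≤ M q) : N.Enabled M t' := by
  have ht'T : t' ∈ N.transitions := N.flow_pt ht' hq
  have ht'post : t' ∈ N.postset q := (N.mem_postset').mpr ⟨N.trans_mem_nodes ht'T, ht'⟩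
  have hupost : u ∈ N.postset q :=
    (N.mem_postset').mpr ⟨N.trans_mem_nodes hu.1, ((N.mem_preset').mp hqu).2⟩
  by_cases hcard : 1 < (N.postset q).card
  · have hpre := hfc q hq hcard t' ht'post
    refine ⟨ht'T, fun p hp => ?_⟩
    rw [hpre, Finset.mem_singleton] at hp
    subst hp
    exact hMq
  · have : u = t' := Finset.card_le_one.mp (not_lt.mp hcard) u hupost t' ht'post
    rwa [← this]

/-- In a free-choice net, two distinct places with distinct chosen output transitions
cannot share: the first place is not an input of the second's chosen transition. -/
lemma noshare {q1 q2 t1 t2 : α} (hfc : N.FreeChoice) (hq1 : q1 ∈ N.places)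
    (hq2 : q2 ∈ N.places) (h1 : (q1, t1) ∈ N.flow) (h2 : (q2, t2) ∈ N.flow)
    (hne : q1 ≠ q2) (hte : t1 ≠ t2) : q1 ∉ N.preset t2 := by
  intro hmem
  have ht2T : t2 ∈ N.transitions := N.flow_pt h2 hq2
  have ht2post1 : t2 ∈ N.postset q1 :=
    (N.mem_postset').mpr ⟨N.trans_mem_nodes ht2T, ((N.mem_preset').mp hmem).2⟩
  have ht1post1 : t1 ∈ N.postset q1 :=
    (N.mem_postset').mpr ⟨N.trans_mem_nodes (N.flow_pt h1 hq1), h1⟩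
  have hcard : 1 < (N.postset q1).card :=
    Finset.one_lt_card.mpr ⟨t1, ht1post1, t2, ht2post1, hte⟩
  have hpre := hfc q1 hq1 hcard t2 ht2post1
  have hq2pre : q2 ∈ N.preset t2 := (N.mem_preset').mpr ⟨N.place_mem_nodes hq2, h2⟩
  rw [hpre, Finset.mem_singleton] at hq2pre
  exact hne hq2pre.symm

end PetriNet

section MainLemma

variable {α : Type} [DecidableEq α]

private lemma getElem_idx {l : List α} {i j : ℕ} (h : i = j) (hi : i < l.length) :
    l[i] = l[j]'(h ▸ hi) := by subst h; rfl

/-- Key induction: along an acyclic path ending at the sink of a sound free-choice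
workflow net, no reachable marking can put tokens on two distinct path places, nor
two tokens on a single path place. -/
theorem WorkflowNet.two_tokens_false (W : WorkflowNet α)
    (hfc : W.toPetriNet.FreeChoice) (hsound : W.Sound)
    (w : List α) (hpath : W.toPetriNet.IsPath w) (hnd : w.Nodup)
    (hlast : w.getLast? = some W.sink) :
    ∀ n i j, i ≤ j → ∀ (hj : j < w.length),
      (w.length - 1 - i) + (w.length - 1 - j) ≤ n →
      ∀ (hi : i < w.length), w[i] ∈ W.places → w[j] ∈ W.places →
      ∀ M, W.toPetriNet.Reachable W.initialMarking M →
      1 ≤ M w[i] → 1 ≤ M w[j] → (i ≠ j ∨ 2 ≤ M w[i]) → False := by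
  set N := W.toPetriNet with hN
  have hL : 1 ≤ w.length := by
    cases w with
    | nil => exact absurd rfl hpath.1
    | cons a l => simp
  have hlastL : w.length - 1 < w.length := by omega
  have hwlast : w[w.length - 1] = W.sink := by
    rw [List.getLast?_eq_getElem?, List.getElem?_eq_getElem hlastL] at hlast
    exact Option.some_injective _ hlast
  have hchain := List.isChain_iff_getElem.mp hpath.2.2
  -- flow between consecutive path nodes
  have hflow : ∀ k (h : k + 1 < w.length), (w[k], w[k+1]) ∈ N.flow := by
    intro k h
    have := hchain k (by omega)
    simpa using this
  -- structure after a place that is not the last node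
  have hsucc : ∀ k (h : k < w.length - 1), w[k]'(by omega) ∈ W.places →
      w[k+1]'(by omega) ∈ W.transitions ∧ ∃ (h2 : k + 2 < w.length),
      w[k+2] ∈ W.places := by
    intro k h hk
    have hf1 := hflow k (by omega)
    have ht : w[k+1]'(by omega) ∈ W.transitions := N.flow_pt hf1 hk
    have hne : k + 1 ≠ w.length - 1 := by
      intro he
      have hs : w[k+1]'(by omega) = W.sink := by
        rw [getElem_idx he (by omega)] at ht ⊢
        exact hwlast
      exact N.not_trans_of_place (hs ▸ W.sink_mem) ht
    have hk2 : k + 2 < w.length := by omega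
    have hf2 := hflow (k+1) (by omega)
    exact ⟨ht, hk2, N.flow_tp hf2 ht⟩
  -- base case argument: a token on the sink plus anything more contradicts soundness
  have hbase : ∀ i (hi : i < w.length) M, N.Reachable W.initialMarking M →
      1 ≤ M w[i] → 1 ≤ M W.sink → (w[i] ≠ W.sink ∨ 2 ≤ M W.sink) → False := by
    intro i hi M hM h1 h2 h3
    have hterm := (hsound.1 M hM).2 h2
    rcases h3 with h3 | h3
    · rw [hterm] at h1
      simp only [WorkflowNet.terminalMarking, if_neg h3] at h1
      omega
    · rw [hterm] at h3
      simp [WorkflowNet.terminalMarking] at h3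
  intro n
  induction n with
  | zero =>
    intro i j hij hj hm hi hpi hpj M hM h1 h2 h3
    -- measure zero forces i = j = last index
    have hi' : i = w.length - 1 := by omega
    have hj' : j = w.length - 1 := by omega
    subst hi'
    subst hj'
    rcases h3 with h3 | h3
    · exact h3 rfl
    · exact hbase _ hi M hM h1 (hwlast ▸ h1) (Or.inr (hwlast ▸ h3))
  | succ n ih =>
    intro i j hij hj hm hi hpi hpj M hM h1 h2 h3
    by_cases hjl : j = w.length - 1
    · subst hjl
      have hBo : w[w.length - 1] = W.sink := hwlast
      rcases h3 with h3 | h3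
      · refine hbase i hi M hM h1 (hBo ▸ h2) (Or.inl ?_)
        rw [← hBo]
        exact fun he => h3 ((hnd.getElem_inj_iff).mp he)
      · have hieq : i = w.length - 1 := by
          by_contra hne
          exact hbase i hi M hM h1 (hBo ▸ h2) (Or.inl (by
            rw [← hBo]; exact fun he => hne ((hnd.getElem_inj_iff).mp he)))
        subst hieq
        exact hbase _ hi M hM h1 (hBo ▸ h1) (Or.inr (hBo ▸ h3))
    · -- inductive step: j < w.length - 1
      have hjlt : j < w.length - 1 := by omega
      have hilt : i < w.length - 1 := by omega
      -- the index-i place is not the sink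
      have hAo : w[i] ≠ W.sink := by
        rw [← hwlast]
        intro he
        have := (hnd.getElem_inj_iff).mp he
        omega
      -- from M we can reach the terminal marking
      have hterm := (hsound.1 M hM).1
      rcases N.first_consumer (w[i]) (w[j]) M _ hterm with ⟨hca, _⟩ | ⟨Mτ, u, hr, hta, htb, hu, hd⟩
      · -- tokens never decreased: impossible since terminal marks only the sink
        simp only [WorkflowNet.terminalMarking, if_neg hAo] at hca
        omega
      · have hMτ : N.Reachable W.initialMarking Mτ := hM.trans hr
        have h1τ : 1 ≤ Mτ w[i] := le_trans h1 hta
        have h2τ : 1 ≤ Mτ w[j] := le_trans h2 htb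
        by_cases hij' : i = j
        · -- two tokens on w[i]; push one to the next place on the path
          subst hij'
          have h2A : 2 ≤ M w[i] := h3.resolve_left (fun h => h rfl)
          have h2Aτ : 2 ≤ Mτ w[i] := le_trans h2A hta
          obtain ⟨htT, hi2, hpi2⟩ := hsucc i hilt hpi
          have hdu : w[i] ∈ N.preset u := by tauto
          have hen : N.Enabled Mτ (w[i+1]'(by omega)) :=
            N.redirect hfc hpi (hflow i (by omega)) hu hdu h1τ
          set t := w[i+1]'(by omega) with hts
          set M'' := N.fire Mτ t with hM''
          have hreach'' : N.Reachable W.initialMarking M'' :=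
            hMτ.tail ⟨t, hen, rfl⟩
          have hA'' : 1 ≤ M'' w[i] :=
            le_trans (by omega) (N.fire_sub (M := Mτ) (t := t) (p := w[i]))
          have hs'' : 1 ≤ M'' (w[i+2]'hi2) := by
            refine N.fire_pos hen ?_
            exact (N.mem_postset').mpr ⟨N.place_mem_nodes hpi2, hflow (i+1) hi2⟩
          exact ih i (i+2) (by omega) hi2 (by omega) hi hpi hpi2 M'' hreach''
            hA'' hs'' (Or.inl (by omega))
        · -- distinct marked places w[i] (earlier) and w[j] (later)
          have hilj : i < j := lt_of_le_of_ne hij hij'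
          have hAB : w[i] ≠ w[j] := fun he => hij' ((hnd.getElem_inj_iff).mp he)
          obtain ⟨htTi, hi2, hpi2⟩ := hsucc i hilt hpi
          obtain ⟨htTj, hj2, hpj2⟩ := hsucc j hjlt hpj
          have htne : w[i+1]'(by omega) ≠ w[j+1]'(by omega) := by
            intro he
            have := (hnd.getElem_inj_iff).mp he
            omega
          rcases hd with hdA | hdB
          · -- the consumer takes from w[i]: push the w[i] token one step
            have hen : N.Enabled Mτ (w[i+1]'(by omega)) :=
              N.redirect hfc hpi (hflow i (by omega)) hu hdA h1τ
            set t := w[i+1]'(by omega) with hts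
            have hBnot : w[j] ∉ N.preset t :=
              N.noshare hfc hpj hpi (hflow j (by omega)) (hflow i (by omega))
                (Ne.symm hAB) (Ne.symm htne)
            set M'' := N.fire Mτ t with hM''
            have hreach'' : N.Reachable W.initialMarking M'' :=
              hMτ.tail ⟨t, hen, rfl⟩
            have hB'' : 1 ≤ M'' w[j] := le_trans h2τ (N.fire_mono hBnot)
            have hpost2 : (w[i+2]'hi2) ∈ N.postset t :=
              (N.mem_postset').mpr ⟨N.place_mem_nodes hpi2, hflow (i+1) hi2⟩
            have hs'' : 1 ≤ M'' (w[i+2]'hi2) := N.fire_pos hen hpost2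
            -- i + 2 ≤ j since w[i+1] is a transition and w[j] a place
            have hi2j : i + 2 ≤ j := by
              have : i + 1 ≠ j := by
                intro he
                have hwe : w[i+1]'(by omega) = w[j] := by
                  rw [getElem_idx he (by omega)]
                exact N.not_trans_of_place hpj (hwe ▸ htTi)
              omega
            by_cases he2 : i + 2 = j
            · -- the pushed token lands on w[j]: two tokens on w[j]
              have hw2 : w[i+2]'hi2 = w[j] := by rw [getElem_idx he2 hi2]
              have hpostj : w[j] ∈ N.postset t := hw2 ▸ hpost2
              have hBval : 2 ≤ M'' w[j] := by
                have heq : M'' w[j] = Mτ (w[j]) + 1 := by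
                  show N.fire Mτ t w[j] = _
                  unfold PetriNet.fire
                  rw [if_neg hBnot, if_pos hpostj]
                  omega
                omega
              exact ih j j le_rfl hj (by omega) hj hpj hpj M'' hreach''
                (by omega) (by omega) (Or.inr hBval)
            · exact ih (i+2) j (by omega) hj (by omega) hi2 hpi2 hpj M'' hreach''
                hs'' hB'' (Or.inl (by omega))
          · -- the consumer takes from w[j]: push the w[j] token one step toward the sink
            have hen : N.Enabled Mτ (w[j+1]'(by omega)) :=
              N.redirect hfc hpj (hflow j (by omega)) hu hdB h2τ
            set t := w[j+1]'(by omega) with hts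
            have hAnot : w[i] ∉ N.preset t :=
              N.noshare hfc hpi hpj (hflow i (by omega)) (hflow j (by omega)) hAB htne
            set M'' := N.fire Mτ t with hM''
            have hreach'' : N.Reachable W.initialMarking M'' :=
              hMτ.tail ⟨t, hen, rfl⟩
            have hA'' : 1 ≤ M'' w[i] := le_trans h1τ (N.fire_mono hAnot)
            have hs'' : 1 ≤ M'' (w[j+2]'hj2) := by
              refine N.fire_pos hen ?_
              exact (N.mem_postset').mpr ⟨N.place_mem_nodes hpj2, hflow (j+1) hj2⟩
            exact ih i (j+2) (by omega) hj2 (by omega) hi hpi hpj2 M'' hreach''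
              hA'' hs'' (Or.inl (by omega))

end MainLemma

/-- **Path-to-End Theorem.** In a sound free-choice workflow net, for every place `p`,
every acyclic path `W` from `p` to the sink `o`, and every marking `M` reachable from the
initial marking, at most one place on `W` carries a token in `M`. -/
theorem path_to_end_theorem {α : Type} [DecidableEq α] (W : WorkflowNet α)
    (hfc : W.toPetriNet.FreeChoice) (hsound : W.Sound) :
    ∀ p ∈ W.places, ∀ w : List α,
      W.toPetriNet.IsAcyclicPath w → w.head? = some p → w.getLast? = some W.sink →
      ∀ M, W.toPetriNet.Reachable W.initialMarking M →
        W.toPetriNet.tokensOn M w ≤ 1 := by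
  intro p hp w hw hhead hlast M hM
  by_contra hcon
  push_neg at hcon
  have h2 : 1 < (w.toFinset.filter (fun q => q ∈ W.places ∧ 1 ≤ M q)).card := hcon
  obtain ⟨a, ha, b, hb, hab⟩ := Finset.one_lt_card.mp h2
  simp only [Finset.mem_filter, List.mem_toFinset] at ha hb
  obtain ⟨ia, hia, haa⟩ := List.mem_iff_getElem.mp ha.1
  obtain ⟨ib, hib, hbb⟩ := List.mem_iff_getElem.mp hb.1
  have hne : ia ≠ ib := by
    intro he
    apply hab
    rw [← haa, ← hbb, getElem_idx he hia]
  rcases le_total ia ib with hle | hle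
  · exact W.two_tokens_false hfc hsound w hw.1 hw.2 hlast
      ((w.length - 1 - ia) + (w.length - 1 - ib)) ia ib hle hib le_rfl hia
      (haa ▸ ha.2.1) (hbb ▸ hb.2.1) M hM (haa ▸ ha.2.2) (hbb ▸ hb.2.2) (Or.inl hne)
  · exact W.two_tokens_false hfc hsound w hw.1 hw.2 hlast
      ((w.length - 1 - ib) + (w.length - 1 - ia)) ib ia hle hia le_rfl hib
      (hbb ▸ hb.2.1) (haa ▸ ha.2.1) M hM (hbb ▸ hb.2.2) (haa ▸ ha.2.2) (Or.inl (Ne.symm hne))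
end

section
/- Let WN = (P,T,F,i,o) be a sound acyclic free-choice workflow net (AFW-net). For all distinct nodes x, y ∈ P ∪ T: if there exists an acyclic path from x to y or an acyclic path from y to x, then x and y are not in the concurrency relation, i.e., (x,y) ∉ ∥. -/
namespace AFWAux

open PetriNet

variable {α : Type} [DecidableEq α]

/-- A (not necessarily acyclic) path from `x` to `y`. -/
def Pth (N : PetriNet α) (x y : α) : Prop :=
  ∃ w, N.IsPath w ∧ w.head? = some x ∧ w.getLast? = some y

lemma mem_nodes_left {N : PetriNet α} {a b : α} (h : (a, b) ∈ N.flow) : a ∈ N.nodes := by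
  rcases N.flow_mem _ h with ⟨h1, _⟩ | ⟨h1, _⟩ <;> simp [PetriNet.nodes, h1]

lemma mem_nodes_right {N : PetriNet α} {a b : α} (h : (a, b) ∈ N.flow) : b ∈ N.nodes := by
  rcases N.flow_mem _ h with ⟨_, h1⟩ | ⟨_, h1⟩ <;> simp [PetriNet.nodes, h1]

lemma mem_nodes_of_places {N : PetriNet α} {a : α} (h : a ∈ N.places) : a ∈ N.nodes := by
  simp [PetriNet.nodes, h]

lemma mem_nodes_of_transitions {N : PetriNet α} {a : α} (h : a ∈ N.transitions) : a ∈ N.nodes := by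
  simp [PetriNet.nodes, h]

lemma ne_of_types {N : PetriNet α} {t a : α} (ht : t ∈ N.transitions) (ha : a ∈ N.places) :
    t ≠ a := by
  intro h; subst h
  exact Finset.disjoint_left.mp N.disjoint_pt ha ht

lemma trans_of_place_flow {N : PetriNet α} {a b : α} (h : (a, b) ∈ N.flow)
    (ha : a ∈ N.places) : b ∈ N.transitions := by
  rcases N.flow_mem _ h with ⟨_, h2⟩ | ⟨h1, _⟩
  · exact h2
  · exact absurd rfl (ne_of_types h1 ha)

lemma place_of_flow_trans {N : PetriNet α} {a b : α} (h : (a, b) ∈ N.flow)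
    (hb : b ∈ N.transitions) : a ∈ N.places := by
  rcases N.flow_mem _ h with ⟨h1, _⟩ | ⟨_, h2⟩
  · exact h1
  · exact absurd rfl (ne_of_types hb h2)

lemma place_of_trans_flow {N : PetriNet α} {a b : α} (h : (a, b) ∈ N.flow)
    (ha : a ∈ N.transitions) : b ∈ N.places := by
  rcases N.flow_mem _ h with ⟨h1, _⟩ | ⟨_, h2⟩
  · exact absurd rfl (ne_of_types ha h1)
  · exact h2

lemma mem_preset {N : PetriNet α} {z t : α} :
    z ∈ N.preset t ↔ z ∈ N.nodes ∧ (z, t) ∈ N.flow := by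
  simp [PetriNet.preset]

lemma mem_postset {N : PetriNet α} {t s : α} :
    s ∈ N.postset t ↔ s ∈ N.nodes ∧ (t, s) ∈ N.flow := by
  simp [PetriNet.postset]

lemma pth_single {N : PetriNet α} {a : α} (ha : a ∈ N.nodes) : Pth N a a :=
  ⟨[a], ⟨by simp, by simpa using ha, List.isChain_singleton a⟩, rfl, rfl⟩

lemma pth_cons {N : PetriNet α} {a u b : α} (h : (a, u) ∈ N.flow) (hp : Pth N u b) :
    Pth N a b := by
  obtain ⟨w, ⟨hne, hmem, hch⟩, hh, hl⟩ := hp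
  cases w with
  | nil => simp at hh
  | cons c w' =>
    simp only [List.head?_cons, Option.some.injEq] at hh
    subst hh
    refine ⟨a :: c :: w', ⟨by simp, ?_, List.isChain_cons_cons.mpr ⟨h, hch⟩⟩, rfl, ?_⟩
    · intro x hx
      rcases List.mem_cons.mp hx with rfl | hx
      · exact mem_nodes_left h
      · exact hmem x hx
    · rw [List.getLast?_cons_cons]; exact hl

lemma pth_rec {N : PetriNet α} {b : α} {C : α → Prop} (hb : C b)
    (hstep : ∀ x u, (x, u) ∈ N.flow → Pth N u b → C u → C x) :
    ∀ {a}, Pth N a b → C a := by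
  suffices h : ∀ w, N.IsPath w → ∀ a, w.head? = some a → w.getLast? = some b → C a by
    rintro a ⟨w, hw, hh, hl⟩; exact h w hw a hh hl
  intro w
  induction w with
  | nil => intro hw; exact absurd rfl hw.1
  | cons c w' ih =>
    intro hw a hh hl
    simp only [List.head?_cons, Option.some.injEq] at hh
    subst hh
    cases w' with
    | nil =>
      simp only [List.getLast?_singleton, Option.some.injEq] at hl
      subst hl; exact hb
    | cons d w'' =>
      have hch := List.isChain_cons_cons.mp hw.2.2
      have hw' : N.IsPath (d :: w'') :=
        ⟨by simp, fun x hx => hw.2.1 x (by simp [hx]), hch.2⟩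
      have hl' : (d :: w'').getLast? = some b := by
        rw [List.getLast?_cons_cons] at hl; exact hl
      exact hstep c d hch.1 ⟨d :: w'', hw', rfl, hl'⟩ (ih hw' d rfl hl')

lemma pth_head_cases {N : PetriNet α} {a b : α} (h : Pth N a b) :
    a = b ∨ ∃ u, (a, u) ∈ N.flow ∧ Pth N u b := by
  obtain ⟨w, hw, hh, hl⟩ := h
  cases w with
  | nil => exact absurd rfl hw.1
  | cons c w' =>
    simp only [List.head?_cons, Option.some.injEq] at hh
    subst hh
    cases w' with
    | nil =>
      simp only [List.getLast?_singleton, Option.some.injEq] at hl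
      exact Or.inl hl
    | cons d w'' =>
      have hch := List.isChain_cons_cons.mp hw.2.2
      refine Or.inr ⟨d, hch.1, ⟨d :: w'', ⟨by simp, fun x hx => hw.2.1 x (by simp [hx]), hch.2⟩,
        rfl, ?_⟩⟩
      rw [List.getLast?_cons_cons] at hl; exact hl

lemma pth_last_cases {N : PetriNet α} {a b : α} (h : Pth N a b) :
    a = b ∨ ∃ v, Pth N a v ∧ (v, b) ∈ N.flow := by
  refine pth_rec (C := fun x => x = b ∨ ∃ v, Pth N x v ∧ (v, b) ∈ N.flow) (Or.inl rfl) ?_ h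
  rintro x u hxu hub (rfl | ⟨v, huv, hvb⟩)
  · exact Or.inr ⟨x, pth_single (mem_nodes_left hxu), hxu⟩
  · exact Or.inr ⟨v, pth_cons hxu huv, hvb⟩

lemma pth_snoc {N : PetriNet α} {a v c : α} (h : Pth N a v) (h2 : (v, c) ∈ N.flow) :
    Pth N a c := by
  refine pth_rec (C := fun x => Pth N x c)
    (pth_cons h2 (pth_single (mem_nodes_right h2))) ?_ h
  intro x u hxu _ hC; exact pth_cons hxu hC

lemma no_cycle {N : PetriNet α} (hacyc : N.Acyclic) {a u : α} (h : (a, u) ∈ N.flow)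
    (hp : Pth N u a) : False := by
  obtain ⟨w, hw, hh, hl⟩ := hp
  cases w with
  | nil => exact absurd rfl hw.1
  | cons c w' =>
    simp only [List.head?_cons, Option.some.injEq] at hh
    subst hh
    apply hacyc a
    refine ⟨a :: c :: w', ⟨by simp, ?_, List.isChain_cons_cons.mpr ⟨h, hw.2.2⟩⟩, by simp, rfl, ?_⟩
    · intro x hx
      rcases List.mem_cons.mp hx with rfl | hx
      · exact mem_nodes_left h
      · exact hw.2.1 x hx
    · rw [List.getLast?_cons_cons]; exact hl

open Classical in
/-- The number of strict descendants of `x`: a topological measure. -/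
noncomputable def mm (N : PetriNet α) (x : α) : ℕ :=
  (N.nodes.filter (fun z => ∃ u, (x, u) ∈ N.flow ∧ Pth N u z)).card

lemma mm_edge_lt {N : PetriNet α} (hacyc : N.Acyclic) {a b : α} (h : (a, b) ∈ N.flow) :
    mm N b < mm N a := by
  classical
  apply Finset.card_lt_card
  refine (Finset.ssubset_iff_of_subset ?_).mpr ?_
  · intro z hz
    simp only [Finset.mem_filter] at hz ⊢
    obtain ⟨hzn, u, hbu, hub⟩ := hz
    exact ⟨hzn, b, h, pth_cons hbu hub⟩
  · refine ⟨b, ?_, ?_⟩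
    · simp only [Finset.mem_filter]
      exact ⟨mem_nodes_right h, b, h, pth_single (mem_nodes_right h)⟩
    · simp only [Finset.mem_filter, not_and, not_exists]
      rintro - u hbu hub
      exact no_cycle hacyc hbu hub

lemma mm_mono {N : PetriNet α} (hacyc : N.Acyclic) {a b : α} (h : Pth N a b) :
    mm N b ≤ mm N a := by
  refine pth_rec (C := fun x => mm N b ≤ mm N x) le_rfl ?_ h
  intro x u hxu _ hC
  exact le_trans hC (le_of_lt (mm_edge_lt hacyc hxu))

lemma mm_path_lt {N : PetriNet α} (hacyc : N.Acyclic) {a b : α} (h : Pth N a b)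
    (hne : a ≠ b) : mm N b < mm N a := by
  rcases pth_head_cases h with rfl | ⟨u, hau, hub⟩
  · exact absurd rfl hne
  · exact lt_of_le_of_lt (mm_mono hacyc hub) (mm_edge_lt hacyc hau)

lemma no_cycle_pair {N : PetriNet α} (hacyc : N.Acyclic) {a b : α} (hne : a ≠ b)
    (h1 : Pth N a b) (h2 : Pth N b a) : False := by
  have := mm_path_lt hacyc h1 hne
  have := mm_path_lt hacyc h2 (Ne.symm hne)
  omega

lemma chain'_pred {R : α → α → Prop} :
    ∀ (w : List α), w.Chain' R → ∀ x ∈ w, w.head? = some x ∨ ∃ z ∈ w, R z x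
  | [] => by simp
  | [a] => by simp
  | a :: b :: l => by
    intro hc x hx
    have hch := List.isChain_cons_cons.mp hc
    rcases List.mem_cons.mp hx with rfl | hx
    · exact Or.inl rfl
    · rcases chain'_pred (b :: l) hch.2 x hx with h | ⟨z, hz, hr⟩
      · simp only [List.head?_cons, Option.some.injEq] at h
        subst h
        exact Or.inr ⟨a, by simp, hch.1⟩
      · exact Or.inr ⟨z, by simp [hz], hr⟩

lemma chain'_succ {R : α → α → Prop} :
    ∀ (w : List α), w.Chain' R → ∀ x ∈ w, w.getLast? = some x ∨ ∃ z ∈ w, R x z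
  | [] => by simp
  | [a] => by simp
  | a :: b :: l => by
    intro hc x hx
    have hch := List.isChain_cons_cons.mp hc
    rcases List.mem_cons.mp hx with rfl | hx
    · exact Or.inr ⟨b, by simp, hch.1⟩
    · rcases chain'_succ (b :: l) hch.2 x hx with h | ⟨z, hz, hr⟩
      · rw [List.getLast?_cons_cons]
        exact Or.inl h
      · exact Or.inr ⟨z, by simp [hz], hr⟩

end AFWAux

namespace AFWAux

open PetriNet WorkflowNet

variable {α : Type} [DecidableEq α]

lemma exists_pre (W : WorkflowNet α) {t : α} (ht : t ∈ W.transitions) :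
    ∃ z, z ∈ W.toPetriNet.preset t := by
  obtain ⟨w, hw, hh, hl, hmemw⟩ := W.all_on_path t (mem_nodes_of_transitions ht)
  rcases chain'_pred w hw.2.2 t hmemw with h | ⟨z, hz, hr⟩
  · rw [hh] at h
    simp only [Option.some.injEq] at h
    exact absurd rfl (ne_of_types ht (h ▸ W.source_mem))
  · exact ⟨z, mem_preset.mpr ⟨hw.2.1 z hz, hr⟩⟩

lemma exists_post (W : WorkflowNet α) {t : α} (ht : t ∈ W.transitions) :
    ∃ q, q ∈ W.toPetriNet.postset t := by
  obtain ⟨w, hw, hh, hl, hmemw⟩ := W.all_on_path t (mem_nodes_of_transitions ht)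
  rcases chain'_succ w hw.2.2 t hmemw with h | ⟨z, hz, hr⟩
  · rw [hl] at h
    simp only [Option.some.injEq] at h
    exact absurd rfl (ne_of_types ht (h ▸ W.sink_mem))
  · exact ⟨z, mem_postset.mpr ⟨hw.2.1 z hz, hr⟩⟩

lemma ne_sink_of_out (W : WorkflowNet α) {p u : α} (h : (p, u) ∈ W.toPetriNet.flow) :
    p ≠ W.sink := by
  intro he; subst he
  have : u ∈ W.toPetriNet.postset W.sink := mem_postset.mpr ⟨mem_nodes_right h, h⟩
  rw [W.sink_no_post] at this
  exact absurd this (Finset.notMem_empty u)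

lemma fire_def (N : PetriNet α) (M : α → ℕ) (t p : α) :
    N.fire M t p = (M p - (if p ∈ N.preset t then 1 else 0)) +
      (if p ∈ N.postset t then 1 else 0) := rfl

lemma fire_ge_of_not_pre {N : PetriNet α} {M : α → ℕ} {t p : α} (h : p ∉ N.preset t) :
    M p ≤ N.fire M t p := by
  rw [fire_def, if_neg h]; split <;> omega

lemma fire_ge_one_of_post {N : PetriNet α} {M : α → ℕ} {t q : α} (h : q ∈ N.postset t) :
    1 ≤ N.fire M t q := by
  rw [fire_def, if_pos h]; omega

lemma fire_pre_ge {N : PetriNet α} {M : α → ℕ} {t p : α} (h : p ∈ N.preset t) :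
    M p - 1 ≤ N.fire M t p := by
  rw [fire_def, if_pos h]; split <;> omega

lemma fire_eq_add_one {N : PetriNet α} {M : α → ℕ} {t p : α} (h1 : p ∉ N.preset t)
    (h2 : p ∈ N.postset t) : N.fire M t p = M p + 1 := by
  rw [fire_def, if_neg h1, if_pos h2]; omega

lemma reach_step {N : PetriNet α} {M0 Ms : α → ℕ} {t : α} (h : N.Reachable M0 Ms)
    (he : N.Enabled Ms t) : N.Reachable M0 (N.fire Ms t) :=
  Relation.ReflTransGen.tail h ⟨t, he, rfl⟩

lemma first_consumer (W : WorkflowNet α) (p p' : α) (a b : ℕ) (ha : 1 ≤ a)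
    (hpsink : p ≠ W.sink) :
    ∀ M : α → ℕ,
      Relation.ReflTransGen (fun M M' => ∃ t, W.toPetriNet.Step M t M') M W.terminalMarking →
      W.toPetriNet.Reachable W.initialMarking M → a ≤ M p → b ≤ M p' →
      ∃ Ms t, W.toPetriNet.Reachable W.initialMarking Ms ∧ W.toPetriNet.Enabled Ms t ∧
        a ≤ Ms p ∧ b ≤ Ms p' ∧
        (p ∈ W.toPetriNet.preset t ∨ p' ∈ W.toPetriNet.preset t) := by
  intro M h
  induction h using Relation.ReflTransGen.head_induction_on with
  | refl =>
    intro _ hap _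
    exfalso
    simp only [WorkflowNet.terminalMarking, if_neg hpsink] at hap
    omega
  | head h' hrtg IH =>
    rename_i Ma Mc
    intro hreach hap hbp'
    obtain ⟨t, hstep⟩ := h'
    by_cases hc : p ∈ W.toPetriNet.preset t ∨ p' ∈ W.toPetriNet.preset t
    · exact ⟨Ma, t, hreach, hstep.1, hap, hbp', hc⟩
    · push_neg at hc
      have hMc : Mc = W.toPetriNet.fire Ma t := hstep.2
      have hreach' : W.toPetriNet.Reachable W.initialMarking Mc := by
        rw [hMc]; exact reach_step hreach hstep.1
      refine IH hreach' ?_ ?_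
      · rw [hMc]; exact le_trans hap (fire_ge_of_not_pre hc.1)
      · rw [hMc]; exact le_trans hbp' (fire_ge_of_not_pre hc.2)

end AFWAux


namespace AFWAux

open PetriNet WorkflowNet

variable {α : Type} [DecidableEq α]

/-- **Key lemma**: in a sound acyclic free-choice workflow net, no reachable marking
puts tokens simultaneously on two distinct places joined by a path, nor two tokens
on a single place. -/
lemma key (W : WorkflowNet α) (hfc : W.toPetriNet.FreeChoice) (hacyc : W.toPetriNet.Acyclic)
    (hsound : W.Sound) :
    ∀ n (M : α → ℕ) (p p' : α), W.toPetriNet.Reachable W.initialMarking M →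
      p ∈ W.places → p' ∈ W.places →
      mm W.toPetriNet p + mm W.toPetriNet p' ≤ n → 1 ≤ M p → 1 ≤ M p' →
      ((p ≠ p' ∧ Pth W.toPetriNet p p') ∨ (p = p' ∧ 2 ≤ M p)) → False := by
  intro n
  induction n using Nat.strong_induction_on with
  | _ n IH =>
  intro M p p' hreach hp hp' hmn h1 h1' hcase
  have hterm := (hsound.1 M hreach).1
  rcases hcase with ⟨hne, hpth⟩ | ⟨rfl, h2⟩
  · -- two distinct places p, p' with a path p ⇝ p'
    obtain (rfl | ⟨u, hpu, hub⟩) := pth_head_cases hpth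
    · exact hne rfl
    have hpsink : p ≠ W.sink := ne_sink_of_out W hpu
    have hp'sink : p' ≠ W.sink := by
      intro he; subst he
      have hMt := (hsound.1 M hreach).2 h1'
      rw [hMt] at h1
      simp only [WorkflowNet.terminalMarking, if_neg hpsink] at h1
      omega
    obtain ⟨Ms, t, hreachs, hent, has, hbs, hmem⟩ :=
      first_consumer W p p' 1 1 le_rfl hpsink M hterm hreach h1 h1'
    have ht : t ∈ W.transitions := hent.1
    have hu_trans : u ∈ W.transitions := trans_of_place_flow hpu hp
    have hupost : u ∈ W.toPetriNet.postset p := mem_postset.mpr ⟨mem_nodes_right hpu, hpu⟩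
    by_cases hpt : p ∈ W.toPetriNet.preset t
    · have htflow : (p, t) ∈ W.toPetriNet.flow := (mem_preset.mp hpt).2
      have htpost : t ∈ W.toPetriNet.postset p := mem_postset.mpr ⟨mem_nodes_right htflow, htflow⟩
      by_cases hp't : p' ∈ W.toPetriNet.preset t
      · -- case (i): t consumes from both p and p' — structurally impossible
        by_cases hut : u = t
        · subst hut
          have hp'u : (p', u) ∈ W.toPetriNet.flow := (mem_preset.mp hp't).2
          exact no_cycle_pair hacyc (ne_of_types hu_trans hp') hub
            (pth_cons hp'u (pth_single (mem_nodes_of_transitions hu_trans)))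
        · have hcard : 1 < (W.toPetriNet.postset p).card :=
            Finset.one_lt_card.mpr ⟨u, hupost, t, htpost, hut⟩
          have hpre := hfc p hp hcard t htpost
          rw [hpre] at hp't
          simp only [Finset.mem_singleton] at hp't
          exact hne hp't.symm
      · -- case (ii): t consumes from p only; fire the path transition u
        have henu : W.toPetriNet.Enabled Ms u ∧ p' ∉ W.toPetriNet.preset u := by
          by_cases hut : u = t
          · subst hut; exact ⟨hent, hp't⟩
          · have hcard : 1 < (W.toPetriNet.postset p).card :=
              Finset.one_lt_card.mpr ⟨u, hupost, t, htpost, hut⟩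
            have hpre := hfc p hp hcard u hupost
            refine ⟨⟨hu_trans, ?_⟩, ?_⟩
            · intro z hz; rw [hpre] at hz
              simp only [Finset.mem_singleton] at hz
              subst hz; exact has
            · rw [hpre]
              simp only [Finset.mem_singleton]
              exact fun he => hne he.symm
          
        have hreach1 : W.toPetriNet.Reachable W.initialMarking (W.toPetriNet.fire Ms u) :=
          reach_step hreachs henu.1
        obtain (rfl | ⟨r, hur, hrp'⟩) := pth_head_cases hub
        · exact absurd rfl (ne_of_types hu_trans hp')
        have hr_pl : r ∈ W.places := place_of_trans_flow hur hu_trans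
        have hrpost : r ∈ W.toPetriNet.postset u := mem_postset.mpr ⟨mem_nodes_right hur, hur⟩
        have h1r : 1 ≤ W.toPetriNet.fire Ms u r := fire_ge_one_of_post hrpost
        have h1p' : 1 ≤ W.toPetriNet.fire Ms u p' :=
          le_trans hbs (fire_ge_of_not_pre henu.2)
        by_cases hrp : r = p'
        · subst hrp
          have h2r : 2 ≤ W.toPetriNet.fire Ms u r := by
            rw [fire_eq_add_one henu.2 hrpost]; omega
          have hlt := mm_path_lt hacyc hpth hne
          exact IH (mm W.toPetriNet r + mm W.toPetriNet r) (by omega) _ r r hreach1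
            hr_pl hr_pl le_rfl h1r h1r (Or.inr ⟨rfl, h2r⟩)
        · have hmr : mm W.toPetriNet r < mm W.toPetriNet p :=
            lt_trans (mm_edge_lt hacyc hur) (mm_edge_lt hacyc hpu)
          exact IH (mm W.toPetriNet r + mm W.toPetriNet p') (by omega) _ r p' hreach1
            hr_pl hp' le_rfl h1r h1p' (Or.inl ⟨hrp, hrp'⟩)
    · -- case (iii): t consumes from p' but not p
      have hp't : p' ∈ W.toPetriNet.preset t := hmem.resolve_left hpt
      have hp'flow : (p', t) ∈ W.toPetriNet.flow := (mem_preset.mp hp't).2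
      have hreach1 : W.toPetriNet.Reachable W.initialMarking (W.toPetriNet.fire Ms t) :=
        reach_step hreachs hent
      obtain ⟨q, hq⟩ := exists_post W ht
      have hqflow : (t, q) ∈ W.toPetriNet.flow := (mem_postset.mp hq).2
      have hq_pl : q ∈ W.places := place_of_trans_flow hqflow ht
      have h1q : 1 ≤ W.toPetriNet.fire Ms t q := fire_ge_one_of_post hq
      have h1p : 1 ≤ W.toPetriNet.fire Ms t p := le_trans has (fire_ge_of_not_pre hpt)
      have hPpq : Pth W.toPetriNet p q := pth_snoc (pth_snoc hpth hp'flow) hqflow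
      have hq1 := mm_edge_lt hacyc hqflow
      have hq2 := mm_edge_lt hacyc hp'flow
      have hq3 := mm_path_lt hacyc hpth hne
      have hmq : mm W.toPetriNet q < mm W.toPetriNet p := by omega
      have hpq : p ≠ q := by intro he; rw [he] at hmq; omega
      exact IH (mm W.toPetriNet p + mm W.toPetriNet q) (by omega) _ p q hreach1
        hp hq_pl le_rfl h1p h1q (Or.inl ⟨hpq, hPpq⟩)
  · -- two tokens on one place p
    have hpsink : p ≠ W.sink := by
      intro he; subst he
      have hMt := (hsound.1 M hreach).2 (by omega)
      rw [hMt] at h2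
      simp [WorkflowNet.terminalMarking] at h2
    obtain ⟨Ms, t, hreachs, hent, has, _, hmem⟩ :=
      first_consumer W p p 2 0 (by omega) hpsink M hterm hreach h2 (Nat.zero_le _)
    have hpt : p ∈ W.toPetriNet.preset t := hmem.elim id id
    have hptflow : (p, t) ∈ W.toPetriNet.flow := (mem_preset.mp hpt).2
    have hreach1 : W.toPetriNet.Reachable W.initialMarking (W.toPetriNet.fire Ms t) :=
      reach_step hreachs hent
    obtain ⟨q, hq⟩ := exists_post W hent.1
    have hqflow : (t, q) ∈ W.toPetriNet.flow := (mem_postset.mp hq).2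
    have hq_pl : q ∈ W.places := place_of_trans_flow hqflow hent.1
    have h1q : 1 ≤ W.toPetriNet.fire Ms t q := fire_ge_one_of_post hq
    have h1p : 1 ≤ W.toPetriNet.fire Ms t p := by
      have := fire_pre_ge (M := Ms) hpt
      omega
    have hPpq : Pth W.toPetriNet p q :=
      pth_cons hptflow (pth_cons hqflow (pth_single (mem_nodes_of_places hq_pl)))
    have hmq : mm W.toPetriNet q < mm W.toPetriNet p :=
      lt_trans (mm_edge_lt hacyc hqflow) (mm_edge_lt hacyc hptflow)
    have hpq : p ≠ q := by intro he; rw [he] at hmq; omega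
    exact IH (mm W.toPetriNet p + mm W.toPetriNet q) (by omega) _ p q hreach1
      hp hq_pl le_rfl h1p h1q (Or.inl ⟨hpq, hPpq⟩)

/-- Two distinct places joined by a path are never simultaneously marked. -/
lemma no_two (W : WorkflowNet α) (hfc : W.toPetriNet.FreeChoice)
    (hacyc : W.toPetriNet.Acyclic) (hsound : W.Sound) {M : α → ℕ} {p p' : α}
    (hreach : W.toPetriNet.Reachable W.initialMarking M) (hp : p ∈ W.places)
    (hp' : p' ∈ W.places) (hne : p ≠ p') (hpth : Pth W.toPetriNet p p')
    (h1 : 1 ≤ M p) (h1' : 1 ≤ M p') : False :=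
  key W hfc hacyc hsound (mm W.toPetriNet p + mm W.toPetriNet p') M p p' hreach hp hp'
    le_rfl h1 h1' (Or.inl ⟨hne, hpth⟩)

end AFWAux


namespace AFWAux

open PetriNet WorkflowNet

variable {α : Type} [DecidableEq α]

/-- No path from an enabled transition to a marked place. -/
lemma PT1 (W : WorkflowNet α) (hfc : W.toPetriNet.FreeChoice)
    (hacyc : W.toPetriNet.Acyclic) (hsound : W.Sound) {M : α → ℕ} {t a : α}
    (hreach : W.toPetriNet.Reachable W.initialMarking M) (ht : t ∈ W.transitions)
    (hte : W.toPetriNet.Enabled M t) (hap : a ∈ W.places) (h1 : 1 ≤ M a)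
    (hpth : Pth W.toPetriNet t a) : False := by
  obtain ⟨z, hz⟩ := exists_pre W ht
  have hzflow : (z, t) ∈ W.toPetriNet.flow := (mem_preset.mp hz).2
  have hz_pl : z ∈ W.places := place_of_flow_trans hzflow ht
  have h1z : 1 ≤ M z := hte.2 z hz
  have hPza : Pth W.toPetriNet z a := pth_cons hzflow hpth
  by_cases hza : z = a
  · subst hza
    exact no_cycle_pair hacyc (ne_of_types ht hap) hpth
      (pth_cons hzflow (pth_single (mem_nodes_of_transitions ht)))
  · exact no_two W hfc hacyc hsound hreach hz_pl hap hza hPza h1z h1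

/-- A path from a marked place to an enabled transition forces the place to be
in the preset of the transition. -/
lemma PT2 (W : WorkflowNet α) (hfc : W.toPetriNet.FreeChoice)
    (hacyc : W.toPetriNet.Acyclic) (hsound : W.Sound) {M : α → ℕ} {a t : α}
    (hreach : W.toPetriNet.Reachable W.initialMarking M) (hap : a ∈ W.places)
    (h1 : 1 ≤ M a) (ht : t ∈ W.transitions) (hte : W.toPetriNet.Enabled M t)
    (hpth : Pth W.toPetriNet a t) : a ∈ W.toPetriNet.preset t := by
  obtain (rfl | ⟨v, hav, hvt⟩) := pth_last_cases hpth
  · exact absurd rfl (ne_of_types ht hap).symm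
  · have hv_pre : v ∈ W.toPetriNet.preset t := mem_preset.mpr ⟨mem_nodes_left hvt, hvt⟩
    have h1v : 1 ≤ M v := hte.2 v hv_pre
    have hv_pl : v ∈ W.places := place_of_flow_trans hvt ht
    by_cases hva : v = a
    · subst hva; exact hv_pre
    · exact absurd (no_two W hfc hacyc hsound hreach hap hv_pl (Ne.symm hva) hav h1 h1v)
        not_false

/-- No path between two distinct simultaneously enabled transitions. -/
lemma TT (W : WorkflowNet α) (hfc : W.toPetriNet.FreeChoice)
    (hacyc : W.toPetriNet.Acyclic) (hsound : W.Sound) {M : α → ℕ} {x y : α}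
    (hreach : W.toPetriNet.Reachable W.initialMarking M) (hne : x ≠ y)
    (hxt : x ∈ W.transitions) (hyt : y ∈ W.transitions)
    (hxe : W.toPetriNet.Enabled M x) (hye : W.toPetriNet.Enabled M y)
    (hpth : Pth W.toPetriNet x y) : False := by
  obtain (rfl | ⟨v, hxv, hvy⟩) := pth_last_cases hpth
  · exact hne rfl
  have hv_pre : v ∈ W.toPetriNet.preset y := mem_preset.mpr ⟨mem_nodes_left hvy, hvy⟩
  have h1v : 1 ≤ M v := hye.2 v hv_pre
  have hv_pl : v ∈ W.places := place_of_flow_trans hvy hyt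
  obtain ⟨z, hz⟩ := exists_pre W hxt
  have hzflow : (z, x) ∈ W.toPetriNet.flow := (mem_preset.mp hz).2
  have hz_pl : z ∈ W.places := place_of_flow_trans hzflow hxt
  have h1z : 1 ≤ M z := hxe.2 z hz
  have hPzv : Pth W.toPetriNet z v := pth_cons hzflow hxv
  by_cases hzv : z = v
  · subst hzv
    by_cases hxv' : x = z
    · exact ne_of_types hxt hv_pl hxv'
    · exact no_cycle_pair hacyc hxv' hxv
        (pth_cons hzflow (pth_single (mem_nodes_of_transitions hxt)))
  · exact no_two W hfc hacyc hsound hreach hz_pl hv_pl hzv hPzv h1z h1v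

end AFWAux


/-- In a sound acyclic free-choice workflow net, if there is an acyclic path between two
distinct nodes (in either direction), then they are not concurrent. -/
theorem path_implies_not_concurrent {α : Type} [DecidableEq α] (W : WorkflowNet α)
    (hfc : W.toPetriNet.FreeChoice) (hacyc : W.toPetriNet.Acyclic) (hsound : W.Sound) :
    ∀ x ∈ W.toPetriNet.nodes, ∀ y ∈ W.toPetriNet.nodes, x ≠ y →
      (W.toPetriNet.HasAcyclicPath x y ∨ W.toPetriNet.HasAcyclicPath y x) →
      (x, y) ∉ W.toPetriNet.Concurrent W.initialMarking := by
  intro x hx y hy hne hpath hconc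
  obtain ⟨R, hR, hxyR⟩ := hconc
  obtain ⟨hne', ⟨M, hreach, hax, hay⟩, c1, c2, c3⟩ := hR hxyR
  have hp : AFWAux.Pth W.toPetriNet x y ∨ AFWAux.Pth W.toPetriNet y x := by
    rcases hpath with ⟨w, ⟨hw, _⟩, hh, hl⟩ | ⟨w, ⟨hw, _⟩, hh, hl⟩
    · exact Or.inl ⟨w, hw, hh, hl⟩
    · exact Or.inr ⟨w, hw, hh, hl⟩
  rcases hax with ⟨hxp, hxm⟩ | ⟨hxt, hxe⟩ <;> rcases hay with ⟨hyp, hym⟩ | ⟨hyt, hye⟩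
  · -- both places
    rcases hp with h | h
    · exact AFWAux.no_two W hfc hacyc hsound hreach hxp hyp hne h hxm hym
    · exact AFWAux.no_two W hfc hacyc hsound hreach hyp hxp (Ne.symm hne) h hym hxm
  · -- x place, y transition
    rcases hp with h | h
    · have hxpre := AFWAux.PT2 W hfc hacyc hsound hreach hxp hxm hyt hye h
      have hxxR : (x, x) ∈ R := c2 hxp hyt x hxpre
      exact (hR hxxR).1 rfl
    · exact AFWAux.PT1 W hfc hacyc hsound hreach hyt hye hxp hxm h
  · -- x transition, y place
    rcases hp with h | h
    · exact AFWAux.PT1 W hfc hacyc hsound hreach hxt hxe hyp hym h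
    · have hypre := AFWAux.PT2 W hfc hacyc hsound hreach hyp hym hxt hxe h
      have hyyR : (y, y) ∈ R := c1 hxt hyp y hypre
      exact (hR hyyR).1 rfl
  · -- both transitions
    rcases hp with h | h
    · exact AFWAux.TT W hfc hacyc hsound hreach hne hxt hyt hxe hye h
    · exact AFWAux.TT W hfc hacyc hsound hreach (Ne.symm hne) hyt hxt hye hxe h
end

section
/- Let WN = (P,T,F,i,o) be a sound acyclic free-choice workflow net (AFW-net). For all distinct nodes x, y ∈ P ∪ T: if (x,y) ∈ ∥, then there is no acyclic path from x to y and no acyclic path from y to x. -/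
/-!
In a sound acyclic free-choice workflow net no reachable marking carries a token on a place `p`
and a further token on a place `q` reachable from `p` (possibly `q = p`). Otherwise, as the
terminal marking is still reachable, some transition `u` is the first to consume one of these two
tokens. If `u` consumes the token on `p ≠ q`, then by free choice the successor `t` of `p` on the
path to `q` can fire instead, which moves that token past `t`; otherwise `u` consumes the token on
`q` and puts one on a place after `q`. Either way the total number of descendants of the two
marked places drops, so such a configuration cannot exist. Concurrent nodes are reduced to
concurrent places by the defining clauses of `∥`, and concurrent places are marked together in
some reachable marking.
-/

open Relation Finset

namespace PetriNet

variable {α : Type} [DecidableEq α] {N : PetriNet α}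

def Arc (N : PetriNet α) (a b : α) : Prop := (a, b) ∈ N.flow

lemma Arc.fst_mem_nodes {a b : α} (h : N.Arc a b) : a ∈ N.nodes := by
  rcases N.flow_mem _ h with ⟨ha, -⟩ | ⟨ha, -⟩ <;> simp [nodes, ha]

lemma Arc.snd_mem_nodes {a b : α} (h : N.Arc a b) : b ∈ N.nodes := by
  rcases N.flow_mem _ h with ⟨-, hb⟩ | ⟨-, hb⟩ <;> simp [nodes, hb]

lemma mem_preset_iff {z x : α} : z ∈ N.preset x ↔ N.Arc z x :=
  ⟨fun h => (Finset.mem_filter.mp h).2, fun h => Finset.mem_filter.mpr ⟨h.fst_mem_nodes, h⟩⟩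

lemma mem_postset_iff {x z : α} : z ∈ N.postset x ↔ N.Arc x z :=
  ⟨fun h => (Finset.mem_filter.mp h).2, fun h => Finset.mem_filter.mpr ⟨h.snd_mem_nodes, h⟩⟩

lemma not_mem_transitions_of_mem_places {a : α} (h : a ∈ N.places) : a ∉ N.transitions :=
  Finset.disjoint_left.mp N.disjoint_pt h

lemma Arc.snd_mem_transitions {a b : α} (h : N.Arc a b) (ha : a ∈ N.places) :
    b ∈ N.transitions :=
  ((N.flow_mem _ h).resolve_right fun h' => not_mem_transitions_of_mem_places ha h'.1).2

lemma Arc.snd_mem_places {a b : α} (h : N.Arc a b) (ha : a ∈ N.transitions) : b ∈ N.places :=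
  ((N.flow_mem _ h).resolve_left fun h' => not_mem_transitions_of_mem_places h'.1 ha).2

lemma Arc.fst_mem_places {a b : α} (h : N.Arc a b) (hb : b ∈ N.transitions) : a ∈ N.places :=
  ((N.flow_mem _ h).resolve_right fun h' => not_mem_transitions_of_mem_places h'.2 hb).1

lemma HasAcyclicPath.reflTransGen {x y : α} (h : N.HasAcyclicPath x y) :
    ReflTransGen N.Arc x y := by
  obtain ⟨w, ⟨⟨hne, -, hchain⟩, -⟩, hx, hy⟩ := h
  have hx' : w.head hne = x := by simpa [List.head?_eq_some_head hne] using hx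
  have hy' : w.getLast hne = y := by simpa [List.getLast?_eq_some_getLast hne] using hy
  exact hx' ▸ hy' ▸ List.relationReflTransGen_of_exists_isChain w hchain hne

lemma Acyclic.not_transGen (hacyc : N.Acyclic) (x : α) : ¬ TransGen N.Arc x x := by
  intro h
  obtain ⟨c, hxc, hcx⟩ := TransGen.head'_iff.mp h
  obtain ⟨l, hchain, hlast⟩ := List.exists_isChain_cons_of_relationReflTransGen hcx
  have hpath : (x :: c :: l).IsChain N.Arc := hchain.cons_cons hxc
  refine hacyc x ⟨x :: c :: l, ⟨by simp, ?_, hpath⟩, by simp, rfl, ?_⟩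
  · exact hpath.induction (· ∈ N.nodes) _ (fun _ _ h _ => h.snd_mem_nodes)
      (fun _ => hxc.fst_mem_nodes)
  · rw [List.getLast?_eq_some_getLast (by simp), List.getLast_cons (by simp), hlast]

open Classical in
noncomputable def descendants (N : PetriNet α) (x : α) : Finset α :=
  {y ∈ N.nodes | ReflTransGen N.Arc x y}

lemma card_descendants_lt (hacyc : N.Acyclic) {x y : α} (h : TransGen N.Arc x y) :
    #(N.descendants y) < #(N.descendants x) := by
  classical
  refine Finset.card_lt_card ((Finset.ssubset_iff_of_subset ?_).mpr ⟨x, ?_, ?_⟩)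
  · intro z hz
    simp only [descendants, Finset.mem_filter] at hz ⊢
    exact ⟨hz.1, h.to_reflTransGen.trans hz.2⟩
  · obtain ⟨c, hxc, -⟩ := TransGen.head'_iff.mp h
    simp only [descendants, Finset.mem_filter]
    exact ⟨hxc.fst_mem_nodes, .refl⟩
  · simp only [descendants, Finset.mem_filter, not_and]
    exact fun _ hyx => hacyc.not_transGen x (h.trans_left hyx)

lemma le_fire {f M : α → ℕ} {t : α} (hf : f ≤ M) (ht : ∀ z ∈ N.preset t, f z = 0) :
    f ≤ N.fire M t := by
  intro z
  have : f z ≤ M z := hf z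
  by_cases hz : z ∈ N.preset t
  · simp [ht z hz]
  · simp only [fire, hz, if_false]
    omega

lemma single_add_single_le_fire {M : α → ℕ} {t p b : α} (ht : N.Enabled M t) (hp : 1 ≤ M p)
    (hp₂ : p ∈ N.preset t → 2 ≤ M p) (hb : b ∈ N.postset t) :
    Pi.single p 1 + Pi.single b 1 ≤ N.fire M t := by
  intro z
  have := ht.2 z
  simp only [Pi.add_apply, Pi.single_apply, fire]
  split_ifs <;> grind

lemma Reachable.exists_step_consuming {f M M' : α → ℕ} (h : N.Reachable M M') (hf : f ≤ M)
    (hf' : ¬ f ≤ M') : ∃ Ma u Mb, N.Reachable M Ma ∧ f ≤ Ma ∧ N.Step Ma u Mb ∧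
      ∃ z ∈ N.preset u, f z ≠ 0 := by
  induction h using ReflTransGen.head_induction_on with
  | refl => exact absurd hf hf'
  | head hstep _ ih =>
    obtain ⟨u, hu⟩ := hstep
    by_cases hc : ∃ z ∈ N.preset u, f z ≠ 0
    · exact ⟨_, u, _, .refl, hf, hu, hc⟩
    · push Not at hc
      obtain ⟨Ma, v, Mb, hMa, hfa, hv, hz⟩ := ih (hu.2 ▸ le_fire hf hc)
      exact ⟨Ma, v, Mb, .head ⟨u, hu⟩ hMa, hfa, hv, hz⟩

lemma FreeChoice.enabled_of_enabled (hfc : N.FreeChoice) {M : α → ℕ} {p t u : α}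
    (hp : p ∈ N.places) (hpt : N.Arc p t) (hpu : p ∈ N.preset u) (hu : N.Enabled M u) :
    N.Enabled M t := by
  refine ⟨hpt.snd_mem_transitions hp, ?_⟩
  by_cases htu : t = u
  · exact htu ▸ hu.2
  have hcard : 1 < #(N.postset p) :=
    Finset.one_lt_card.mpr ⟨t, mem_postset_iff.mpr hpt, u,
      mem_postset_iff.mpr (mem_preset_iff.mp hpu), htu⟩
  rw [hfc p hp hcard t (mem_postset_iff.mpr hpt)]
  intro z hz
  rw [Finset.mem_singleton.mp hz]
  exact hu.2 p hpu

lemma Active.one_le {M : α → ℕ} {x : α} (h : N.Active x M) (hx : x ∈ N.places) :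
    1 ≤ M x :=
  h.elim And.right fun h => absurd h.1 (not_mem_transitions_of_mem_places hx)

lemma concStep_mono (M₀ : α → ℕ) {R S : Set (α × α)} (h : R ⊆ S) :
    N.concStep M₀ R ⊆ N.concStep M₀ S :=
  fun _ ⟨h₁, h₂, h₃, h₄, h₅⟩ => ⟨h₁, h₂, fun ha hb z hz => h (h₃ ha hb z hz),
    fun ha hb z hz => h (h₄ ha hb z hz), fun ha hb z hz z' hz' => h (h₅ ha hb z hz z' hz')⟩

lemma concurrent_subset_concStep (M₀ : α → ℕ) :
    N.Concurrent M₀ ⊆ N.concStep M₀ (N.Concurrent M₀) := by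
  rintro q ⟨R, hR, hq⟩
  exact concStep_mono M₀ (Set.subset_sUnion_of_mem hR) (hR hq)

lemma concurrent_symm {M₀ : α → ℕ} {x y : α} (h : (x, y) ∈ N.Concurrent M₀) :
    (y, x) ∈ N.Concurrent M₀ := by
  let C := N.Concurrent M₀
  refine ⟨C ∪ Prod.swap ⁻¹' C, ?_, Or.inr h⟩
  rintro ⟨a, b⟩ (hab | hab)
  · exact concStep_mono M₀ Set.subset_union_left (concurrent_subset_concStep M₀ hab)
  · obtain ⟨hne, ⟨M, hM, hb, ha⟩, h₁, h₂, h₃⟩ := concurrent_subset_concStep M₀ hab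
    exact ⟨Ne.symm hne, ⟨M, hM, ha, hb⟩, fun ha hb z hz => Or.inl (h₂ hb ha z hz),
      fun ha hb z hz => Or.inl (h₁ hb ha z hz),
      fun ha hb z hz z' hz' => Or.inr (h₃ hb ha z' hz' z hz)⟩

end PetriNet

namespace WorkflowNet

open PetriNet

variable {α : Type} [DecidableEq α] {W : WorkflowNet α}

lemma reflTransGen_source {x : α} (hx : x ∈ W.toPetriNet.nodes) :
    ReflTransGen W.toPetriNet.Arc W.source x := by
  obtain ⟨w, ⟨hne, -, hchain⟩, hsrc, -, hxw⟩ := W.all_on_path x hx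
  have hsrc' : w.head hne = W.source := by simpa [List.head?_eq_some_head hne] using hsrc
  exact hsrc' ▸ hchain.induction (ReflTransGen _ (w.head hne)) w (fun _ _ h hr => hr.tail h)
    (fun _ => .refl) x hxw

lemma reflTransGen_sink {x : α} (hx : x ∈ W.toPetriNet.nodes) :
    ReflTransGen W.toPetriNet.Arc x W.sink := by
  obtain ⟨w, ⟨hne, -, hchain⟩, -, hsnk, hxw⟩ := W.all_on_path x hx
  have hsnk' : w.getLast hne = W.sink := by
    simpa [List.getLast?_eq_some_getLast hne] using hsnk
  exact hsnk' ▸ hchain.backwards_induction (ReflTransGen _ · (w.getLast hne)) w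
    (fun _ _ h hr => hr.head h) (fun _ => .refl) x hxw

lemma exists_mem_preset {x : α} (hx : x ∈ W.toPetriNet.nodes) (hxs : x ≠ W.source) :
    ∃ z, z ∈ W.toPetriNet.preset x := by
  obtain h | ⟨z, -, hzx⟩ := (reflTransGen_source hx).cases_tail
  · exact absurd h hxs
  · exact ⟨z, mem_preset_iff.mpr hzx⟩

lemma exists_mem_postset {x : α} (hx : x ∈ W.toPetriNet.nodes) (hxs : x ≠ W.sink) :
    ∃ z, z ∈ W.toPetriNet.postset x := by
  obtain h | ⟨z, hxz, -⟩ := ReflTransGen.cases_head_iff.mp (reflTransGen_sink hx)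
  · exact absurd h hxs
  · exact ⟨z, mem_postset_iff.mpr hxz⟩

lemma single_add_single_not_le_terminalMarking (p q : α) :
    ¬ Pi.single p 1 + Pi.single q 1 ≤ W.terminalMarking := by
  intro h
  have hp := h p
  have hq := h q
  simp only [Pi.add_apply, Pi.single_apply, terminalMarking] at hp hq
  split_ifs at hp hq <;> grind

/-- For `p = q` the bound asks for two tokens on `p`. -/
def SequentialTokens (W : WorkflowNet α) (M : α → ℕ) (p q : α) : Prop :=
  W.toPetriNet.Reachable W.initialMarking M ∧ p ∈ W.places ∧ q ∈ W.places ∧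
    ReflTransGen W.toPetriNet.Arc p q ∧ Pi.single p 1 + Pi.single q 1 ≤ M

namespace SequentialTokens

variable {M : α → ℕ} {p q u : α}

lemma advance_fst (hfc : W.toPetriNet.FreeChoice) (hacyc : W.toPetriNet.Acyclic)
    (h : W.SequentialTokens M p q) (hpq : p ≠ q) (hu : W.toPetriNet.Enabled M u)
    (hpu : p ∈ W.toPetriNet.preset u) :
    ∃ M' a, W.SequentialTokens M' a q ∧
      #(W.toPetriNet.descendants a) < #(W.toPetriNet.descendants p) := by
  obtain ⟨hM, hp, hq, hpq', hle⟩ := h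
  obtain ⟨t, hpt, htq⟩ := (ReflTransGen.cases_head_iff.mp hpq').resolve_left hpq
  have ht : t ∈ W.transitions := hpt.snd_mem_transitions hp
  obtain ⟨a, hta, haq⟩ := (ReflTransGen.cases_head_iff.mp htq).resolve_left
    fun h => not_mem_transitions_of_mem_places hq (h ▸ ht)
  have hen : W.toPetriNet.Enabled M t := hfc.enabled_of_enabled hp hpt hpu hu
  have hqt : q ∉ W.toPetriNet.preset t := fun hqt =>
    hacyc.not_transGen q (.head' (mem_preset_iff.mp hqt) htq)
  refine ⟨_, a, ⟨hM.tail ⟨t, hen, rfl⟩, hta.snd_mem_places ht, hq, haq, ?_⟩,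
    card_descendants_lt hacyc (.tail (.single hpt) hta)⟩
  rw [add_comm]
  refine single_add_single_le_fire hen ?_ (absurd · hqt) (mem_postset_iff.mpr hta)
  exact (hle q).trans' (by simp)

lemma advance_snd (hacyc : W.toPetriNet.Acyclic) (h : W.SequentialTokens M p q)
    (hu : W.toPetriNet.Enabled M u) (hqu : q ∈ W.toPetriNet.preset u)
    (hpu : p ∈ W.toPetriNet.preset u → p = q) :
    ∃ M' b, W.SequentialTokens M' p b ∧
      #(W.toPetriNet.descendants b) < #(W.toPetriNet.descendants q) := by
  obtain ⟨hM, hp, hq, hpq, hle⟩ := h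
  have hus : u ≠ W.sink := fun h =>
    not_mem_transitions_of_mem_places W.sink_mem (h ▸ hu.1)
  obtain ⟨b, hb⟩ := exists_mem_postset (Finset.mem_union_right _ hu.1) hus
  have hub := mem_postset_iff.mp hb
  have hqub : TransGen W.toPetriNet.Arc q b := .tail (.single (mem_preset_iff.mp hqu)) hub
  refine ⟨_, b, ⟨hM.tail ⟨u, hu, rfl⟩, hp, hub.snd_mem_places hu.1, ?_, ?_⟩,
    card_descendants_lt hacyc hqub⟩
  · exact hpq.trans hqub.to_reflTransGen
  · refine single_add_single_le_fire hu ?_ ?_ hb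
    · exact (hle p).trans' (by simp)
    · intro hp'
      obtain rfl := hpu hp'
      simpa [Pi.single_apply] using hle p

lemma exists_descent (hfc : W.toPetriNet.FreeChoice) (hacyc : W.toPetriNet.Acyclic)
    (hsound : W.Sound) (h : W.SequentialTokens M p q) :
    ∃ M' p' q', W.SequentialTokens M' p' q' ∧
      #(W.toPetriNet.descendants p') + #(W.toPetriNet.descendants q') <
        #(W.toPetriNet.descendants p) + #(W.toPetriNet.descendants q) := by
  obtain ⟨hM, hp, hq, hpq, hle⟩ := h
  obtain ⟨Ma, u, _, hMa, hlea, hu, z, hzu, hz⟩ := (hsound.1 M hM).1.exists_step_consuming hle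
    (single_add_single_not_le_terminalMarking p q)
  have ha : W.SequentialTokens Ma p q := ⟨hM.trans hMa, hp, hq, hpq, hlea⟩
  have hzpq : z = p ∨ z = q := by
    by_contra! hne
    simp [hne.1, hne.2] at hz
  by_cases hfst : p ≠ q ∧ p ∈ W.toPetriNet.preset u
  · obtain ⟨M', a, ha', hlt⟩ := ha.advance_fst hfc hacyc hfst.1 hu.1 hfst.2
    exact ⟨M', a, q, ha', by omega⟩
  · have hpu : p ∈ W.toPetriNet.preset u → p = q := fun hpu =>
      Classical.byContradiction fun hpq => hfst ⟨hpq, hpu⟩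
    have hqu : q ∈ W.toPetriNet.preset u := by
      rcases hzpq with rfl | rfl
      · exact hpu hzu ▸ hzu
      · exact hzu
    obtain ⟨M', b, hb, hlt⟩ := ha.advance_snd hacyc hu.1 hqu hpu
    exact ⟨M', p, b, hb, by omega⟩

end SequentialTokens

lemma not_sequentialTokens (hfc : W.toPetriNet.FreeChoice) (hacyc : W.toPetriNet.Acyclic)
    (hsound : W.Sound) (M : α → ℕ) (p q : α) : ¬ W.SequentialTokens M p q := by
  induction hn : #(W.toPetriNet.descendants p) + #(W.toPetriNet.descendants q)
    using Nat.strong_induction_on generalizing M p q with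
  | _ n ih =>
    intro h
    obtain ⟨M', p', q', h', hlt⟩ := h.exists_descent hfc hacyc hsound
    exact ih _ (hn ▸ hlt) M' p' q' rfl h'

lemma not_reflTransGen_of_marked (hfc : W.toPetriNet.FreeChoice) (hacyc : W.toPetriNet.Acyclic)
    (hsound : W.Sound) {M : α → ℕ} {p q : α} (hM : W.toPetriNet.Reachable W.initialMarking M)
    (hp : p ∈ W.places) (hq : q ∈ W.places) (hpq : p ≠ q) (hMp : 1 ≤ M p)
    (hMq : 1 ≤ M q) :
    ¬ ReflTransGen W.toPetriNet.Arc p q := fun h => by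
  refine not_sequentialTokens hfc hacyc hsound M p q ⟨hM, hp, hq, h, fun z => ?_⟩
  simp only [Pi.add_apply, Pi.single_apply]
  split_ifs <;> grind

lemma not_reflTransGen_of_concurrent_places (hfc : W.toPetriNet.FreeChoice)
    (hacyc : W.toPetriNet.Acyclic) (hsound : W.Sound) {p q : α} (hp : p ∈ W.places)
    (hq : q ∈ W.places) (h : (p, q) ∈ W.toPetriNet.Concurrent W.initialMarking) :
    ¬ ReflTransGen W.toPetriNet.Arc p q := by
  obtain ⟨hpq, ⟨M, hM, hMp, hMq⟩, -⟩ := concurrent_subset_concStep _ h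
  exact not_reflTransGen_of_marked hfc hacyc hsound hM hp hq hpq (hMp.one_le hp) (hMq.one_le hq)

lemma not_reflTransGen_of_concurrent (hfc : W.toPetriNet.FreeChoice)
    (hacyc : W.toPetriNet.Acyclic) (hsound : W.Sound) {x y : α} (hx : x ∈ W.toPetriNet.nodes)
    (hy : y ∈ W.toPetriNet.nodes) (h : (x, y) ∈ W.toPetriNet.Concurrent W.initialMarking) :
    ¬ ReflTransGen W.toPetriNet.Arc x y := by
  intro hxy
  obtain ⟨hne, -, hTP, hPT, hTT⟩ := concurrent_subset_concStep _ h
  have hpred : ∃ v ∈ W.toPetriNet.preset y, ReflTransGen W.toPetriNet.Arc x v := by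
    obtain hyx | ⟨v, hxv, hvy⟩ := hxy.cases_tail
    · exact absurd hyx.symm hne
    · exact ⟨v, mem_preset_iff.mpr hvy, hxv⟩
  have hpre : x ∈ W.transitions → ∃ z, z ∈ W.toPetriNet.preset x := fun hxT =>
    exists_mem_preset hx fun h => not_mem_transitions_of_mem_places W.source_mem (h ▸ hxT)
  rcases Finset.mem_union.mp hx with hxP | hxT <;> rcases Finset.mem_union.mp hy with hyP | hyT
  · exact not_reflTransGen_of_concurrent_places hfc hacyc hsound hxP hyP h hxy
  · obtain ⟨v, hv, hxv⟩ := hpred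
    exact not_reflTransGen_of_concurrent_places hfc hacyc hsound hxP
      ((mem_preset_iff.mp hv).fst_mem_places hyT) (concurrent_symm (hPT hxP hyT v hv)) hxv
  · obtain ⟨z, hz⟩ := hpre hxT
    exact not_reflTransGen_of_concurrent_places hfc hacyc hsound
      ((mem_preset_iff.mp hz).fst_mem_places hxT) hyP (hTP hxT hyP z hz)
      (.head (mem_preset_iff.mp hz) hxy)
  · obtain ⟨v, hv, hxv⟩ := hpred
    obtain ⟨z, hz⟩ := hpre hxT
    exact not_reflTransGen_of_concurrent_places hfc hacyc hsound
      ((mem_preset_iff.mp hz).fst_mem_places hxT) ((mem_preset_iff.mp hv).fst_mem_places hyT)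
      (hTT hxT hyT z hz v hv) (.head (mem_preset_iff.mp hz) hxv)

end WorkflowNet

/-- In a sound acyclic free-choice workflow net, if two distinct nodes are concurrent,
then there is no acyclic path from either one to the other. -/
theorem concurrent_implies_no_path {α : Type} [DecidableEq α] (W : WorkflowNet α)
    (hfc : W.toPetriNet.FreeChoice) (hacyc : W.toPetriNet.Acyclic) (hsound : W.Sound) :
    ∀ x ∈ W.toPetriNet.nodes, ∀ y ∈ W.toPetriNet.nodes, x ≠ y →
      (x, y) ∈ W.toPetriNet.Concurrent W.initialMarking →
      ¬ W.toPetriNet.HasAcyclicPath x y ∧ ¬ W.toPetriNet.HasAcyclicPath y x := by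
  intro x hx y hy _ h
  exact ⟨fun hxy => W.not_reflTransGen_of_concurrent hfc hacyc hsound hx hy h hxy.reflTransGen,
    fun hyx => W.not_reflTransGen_of_concurrent hfc hacyc hsound hy hx
      (PetriNet.concurrent_symm h) hyx.reflTransGen⟩
end
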